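/- arXiv:2206.04303 — 3 statements merged into one kernel-verified Lean document; each statement's English description precedes it below -/
import Mathlib

section
/- Fix an integer n ≥ 1, a real b > 0, an index i ∈ {1,…,n}, and nonnegative reals V_u(k) for u ∈ {1,…,n}, k ≥ 1. Define W : ℕ → ℝ by W(1) = 0 and W(k) = max(W(k−1) + Σ_{u=1}^{n} V_u(k−1) − n·b, 0) for k ≥ 2, and define A_i(k) = W(k) + Σ_{u=1}^{i} V_u(k) + n·b. Then for every k ≥ 1, A_i(k) = max over s ∈ {1,…,k} of [ Σ_{r=s}^{k−1} Σ_{u=1}^{n} V_u(r) + Σ_{u=1}^{i} V_u(k) − (k−s−1)·n·b ], where the empty sum (s = k) equals 0. -/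
/-! Unrolling the Lindley recursion `W k = max (W (k - 1) + x (k - 1)) 0`, `W 1 = 0`, gives
`W k = max_{1 ≤ s ≤ k} ∑_{s ≤ r < k} x r`, the maximum being attained at the start `s` of the
busy period containing `k`. With `x r = ∑_u V u r - n b` and the constant shift
`∑_{u ≤ i} V u k + n b`, this is the peak-age formula. -/

open Finset

theorem lindley_eq_sup' {G : Type*} [AddCommGroup G] [LinearOrder G] [IsOrderedAddMonoid G]
    (x W : ℕ → G) (hW1 : W 1 = 0)
    (hWrec : ∀ k, 2 ≤ k → W k = max (W (k - 1) + x (k - 1)) 0) :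
    ∀ k, ∀ hk : 1 ≤ k, W k = (Icc 1 k).sup' (nonempty_Icc.mpr hk) fun s => ∑ r ∈ Ico s k, x r := by
  intro k hk
  induction k, hk using Nat.le_induction with
  | base => simp [hW1]
  | succ m hm ih =>
    have hIcc : Icc 1 (m + 1) = insert (m + 1) (Icc 1 m) :=
      (insert_Icc_right_eq_Icc_add_one (by omega)).symm
    rw [hWrec (m + 1) (by omega), Nat.add_sub_cancel, ih, sup'_add,
      sup'_congr _ hIcc fun _ _ => rfl, sup'_insert, Ico_self, sum_empty, max_comm]
    congr 1
    refine sup'_congr _ rfl fun s hs => ?_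
    rw [sum_Ico_succ_top (mem_Icc.mp hs).2]

theorem fcfs_peak_age_formula_general (n : ℕ) (b : ℝ)
    (i : ℕ)
    (V : ℕ → ℕ → ℝ)
    (W A : ℕ → ℝ)
    (hW1 : W 1 = 0)
    (hWrec : ∀ k, 2 ≤ k →
      W k = max (W (k - 1) + ∑ u ∈ Finset.Icc 1 n, V u (k - 1) - n * b) 0)
    (hA : ∀ k, A k = W k + ∑ u ∈ Finset.Icc 1 i, V u k + n * b) :
    ∀ k, ∀ hk : 1 ≤ k,
      A k = (Finset.Icc 1 k).sup' (Finset.nonempty_Icc.mpr hk)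
        (fun s => ∑ r ∈ Finset.Ico s k, ∑ u ∈ Finset.Icc 1 n, V u r
          + ∑ u ∈ Finset.Icc 1 i, V u k - ((k : ℝ) - s - 1) * (n * b)) := by
  intro k hk
  have hWrec' : ∀ k, 2 ≤ k →
      W k = max (W (k - 1) + (∑ u ∈ Icc 1 n, V u (k - 1) - n * b)) 0 := fun k hk => by
    rw [hWrec k hk, add_sub_assoc]
  rw [hA, lindley_eq_sup' (fun r => ∑ u ∈ Icc 1 n, V u r - n * b) W hW1 hWrec' k hk, add_assoc, sup'_add]
  refine sup'_congr _ rfl fun s hs => ?_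
  rw [sum_sub_distrib, sum_const, Nat.card_Ico, nsmul_eq_mul, Nat.cast_sub (mem_Icc.mp hs).2]
  ring

/-- Peak-age evolution under round-robin FCFS:
`A i k = max_{1 ≤ s ≤ k} [ Σ_{r=s}^{k-1} Σ_{u=1}^n V u r + Σ_{u=1}^i V u k - (k-s-1)·n·b ]`. -/
theorem fcfs_peak_age_formula (n : ℕ) (hn : 1 ≤ n) (b : ℝ) (hb : 0 < b)
    (i : ℕ) (hi : i ∈ Finset.Icc 1 n)
    (V : ℕ → ℕ → ℝ) (hV : ∀ u k, 0 ≤ V u k)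
    (W A : ℕ → ℝ)
    (hW1 : W 1 = 0)
    (hWrec : ∀ k, 2 ≤ k →
      W k = max (W (k - 1) + ∑ u ∈ Finset.Icc 1 n, V u (k - 1) - n * b) 0)
    (hA : ∀ k, A k = W k + ∑ u ∈ Finset.Icc 1 i, V u k + n * b) :
    ∀ k, ∀ hk : 1 ≤ k,
      A k = (Finset.Icc 1 k).sup' (Finset.nonempty_Icc.mpr hk)
        (fun s => ∑ r ∈ Finset.Ico s k, ∑ u ∈ Finset.Icc 1 n, V u r
          + ∑ u ∈ Finset.Icc 1 i, V u k - ((k : ℝ) - s - 1) * (n * b)) :=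
  fcfs_peak_age_formula_general n b i V W A hW1 hWrec hA
end

section
/- Fix integers n ≥ 1, k ≥ 1, an index i ∈ {1,…,n}, and reals b > 0, x > 0. Let (V_u(r))_{u∈{1,…,n}, r∈{1,…,k}} be i.i.d. nonnegative real-valued random variables whose log-moment generating function Λ(θ) = log E[e^{θ V}] is finite for all θ ≥ 0. Let A_i(k) = max over s ∈ {1,…,k} of [ Σ_{r=s}^{k−1} Σ_{u=1}^{n} V_u(r) + Σ_{u=1}^{i} V_u(k) − (k−s−1)·n·b ]. For each integer r ≥ 1 define J(r) = sup over θ > 0 of [ θ·(x/r + ((r−2)/r)·b) − ((r + 1 − i/n)/r)·Λ(θ) ]. Then P(A_i(k) ≥ n·x) ≤ Σ_{r=1}^{k} exp( −n·r·J(r) ). -/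
/-!
The event `A_i(k) ≥ n x` is the union over `s` of the events that the `s`-th term of the maximum
exceeds `n x`. That term is a sum of `(r - 1) n + i` i.i.d. transmission times, `r = k + 1 - s`,
minus a deterministic drift, so Chernoff's bound controls each event by
`exp (-θ (n x + (r - 2) n b) + ((r - 1) n + i) Λ(θ))` for every `θ > 0`. Since `Λ ≥ 0` and
`(r - 1) n + i ≤ (r + 1) n - i`, this is at most
`exp (-n r (θ (x / r + (r - 2) b / r) - (r + 1 - i / n) Λ(θ) / r))`, and optimising over `θ`
gives the `r`-th term of the union bound.
-/

open MeasureTheory ProbabilityTheory Real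

/-- Pairs `(u, r)` (source `u`, round `r`) whose transmission times enter the `s`-th term of the
peak age. -/
def windowPackets (n i s k : ℕ) : Finset (ℕ × ℕ) :=
  Finset.Icc 1 n ×ˢ Finset.Ico s k ∪ Finset.Icc 1 i ×ˢ {k}

lemma sum_windowPackets {M : Type*} [AddCommMonoid M] (n i s k : ℕ) (f : ℕ → ℕ → M) :
    ∑ p ∈ windowPackets n i s k, f p.1 p.2
      = ∑ r ∈ Finset.Ico s k, ∑ u ∈ Finset.Icc 1 n, f u r + ∑ u ∈ Finset.Icc 1 i, f u k := by
  rw [windowPackets, Finset.sum_union, Finset.sum_product_right, Finset.sum_product_right,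
    Finset.sum_singleton]
  simp only [Finset.disjoint_left, Finset.mem_product, Finset.mem_Ico, Finset.mem_singleton]
  omega

lemma windowPackets_subset {n i s k : ℕ} (hs : 1 ≤ s) (hk : 1 ≤ k) (hi : i ≤ n) :
    windowPackets n i s k ⊆ Finset.Icc 1 n ×ˢ Finset.Icc 1 k := by
  intro p
  simp only [windowPackets, Finset.mem_union, Finset.mem_product, Finset.mem_Icc, Finset.mem_Ico,
    Finset.mem_singleton]
  omega

lemma sum_preimage_windowPackets {M : Type*} [AddCommMonoid M] {n i s k : ℕ} (hs : 1 ≤ s)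
    (hk : 1 ≤ k) (hi : i ≤ n) (f : ℕ → ℕ → M) :
    ∑ p ∈ (windowPackets n i s k).preimage (Prod.map Subtype.val Subtype.val)
        ((Subtype.val_injective (p := (· ∈ Finset.Icc 1 n))).prodMap
          (Subtype.val_injective (p := (· ∈ Finset.Icc 1 k)))).injOn,
        f p.1 p.2
      = ∑ r ∈ Finset.Ico s k, ∑ u ∈ Finset.Icc 1 n, f u r + ∑ u ∈ Finset.Icc 1 i, f u k := by
  rw [← sum_windowPackets]
  refine Finset.sum_preimage (Prod.map Subtype.val Subtype.val) _ _ (fun p => f p.1 p.2) ?_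
  intro p hp hrange
  obtain ⟨hu, hr⟩ := Finset.mem_product.mp (windowPackets_subset hs hk hi hp)
  exact absurd ⟨(⟨p.1, hu⟩, ⟨p.2, hr⟩), rfl⟩ hrange

lemma cgf_nonneg_of_nonneg {Ω : Type*} [MeasurableSpace Ω] {μ : Measure Ω} [IsProbabilityMeasure μ]
    {X : Ω → ℝ} {t : ℝ} (hX : 0 ≤ᵐ[μ] X) (ht : 0 ≤ t) : 0 ≤ cgf X μ t := by
  by_cases h_int : Integrable (fun ω => exp (t * X ω)) μ
  · refine Real.log_nonneg ?_
    calc (1 : ℝ) = ∫ _, (1 : ℝ) ∂μ := by simp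
      _ ≤ mgf X μ t := integral_mono_ae (integrable_const 1) h_int <| by
          filter_upwards [hX] with ω hω using one_le_exp (mul_nonneg ht hω)
  · simp [cgf, mgf_undef h_int]

theorem measureReal_sum_ge_le_exp_card_mul_cgf {Ω ι : Type*} [MeasurableSpace Ω] {μ : Measure Ω}
    [IsFiniteMeasure μ] {X : ι → Ω → ℝ} {Y : Ω → ℝ} {s : Finset ι} {t : ℝ}
    (h_meas : ∀ i, Measurable (X i)) (h_indep : iIndepFun X μ)
    (hident : ∀ i ∈ s, IdentDistrib (X i) Y μ μ) (ht : 0 ≤ t)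
    (h_int : Integrable (fun ω => exp (t * Y ω)) μ) (ε : ℝ) :
    μ.real {ω | ε ≤ ∑ i ∈ s, X i ω} ≤ exp (-t * ε + s.card * cgf Y μ t) := by
  have h_int_i : ∀ i ∈ s, Integrable (fun ω => exp (t * X i ω)) μ := fun i hi =>
    ((hident i hi).comp (measurable_const_mul t).exp).integrable_iff.mpr h_int
  have h_cgf : cgf (∑ i ∈ s, X i) μ t = s.card * cgf Y μ t := by
    rw [h_indep.cgf_sum h_meas h_int_i, ← nsmul_eq_mul, ← Finset.sum_const]
    refine Finset.sum_congr rfl fun i hi => ?_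
    simp only [cgf, mgf_congr_of_identDistrib _ _ (hident i hi) t]
  simpa [Finset.sum_apply, h_cgf] using
    measure_ge_le_exp_cgf ε ht (h_indep.integrable_exp_mul_sum h_meas h_int_i)

lemma measure_setOf_le_sup'_le_sum {Ω ι α : Type*} [MeasurableSpace Ω] [LinearOrder α]
    (μ : Measure Ω) {s : Finset ι} (hs : s.Nonempty) (f : ι → Ω → α) (c : α) :
    μ {ω | c ≤ s.sup' hs (fun j => f j ω)} ≤ ∑ j ∈ s, μ {ω | c ≤ f j ω} := by
  refine (measure_mono fun ω hω => ?_).trans (measure_biUnion_finset_le s _)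
  simpa only [Set.mem_ofPred_eq, Finset.le_sup'_iff, Set.mem_iUnion₂, exists_prop] using hω

theorem EReal.le_exp_neg_mul_iSup_iff {ι : Sort*} {p : ENNReal} {a : ℝ} (ha : 0 < a)
    {f : ι → EReal} :
    p ≤ EReal.exp (((-a : ℝ) : EReal) * ⨆ j, f j) ↔
      ∀ j, p ≤ EReal.exp (((-a : ℝ) : EReal) * f j) := by
  have key : ∀ z : EReal, p ≤ EReal.exp (((-a : ℝ) : EReal) * z) ↔ z ≤ -ENNReal.log p / a := by
    intro z
    rw [← ENNReal.logOrderIso.le_iff_le, ENNReal.logOrderIso_apply, ENNReal.logOrderIso_apply,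
      EReal.log_exp, EReal.coe_neg, EReal.neg_mul, EReal.le_neg,
      EReal.le_div_iff_mul_le (by exact_mod_cast ha) (EReal.coe_ne_top a), mul_comm]
  simp only [key, iSup_le_iff]

lemma Finset.sum_Icc_one_reflect {M : Type*} [AddCommMonoid M] (f : ℕ → M) (k : ℕ) :
    ∑ s ∈ Finset.Icc 1 k, f (k + 1 - s) = ∑ r ∈ Finset.Icc 1 k, f r := by
  rw [← Finset.Ico_succ_right_eq_Icc, Order.succ_eq_add_one,
    Finset.sum_Ico_reflect f 1 (n := k + 1) (Nat.le_succ _)]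
  simp

lemma window_exponent_le {n r i x b θ Λ : ℝ} (hn : 0 < n) (hr : 0 < r) (hi : i ≤ n)
    (hΛ : 0 ≤ Λ) :
    -θ * (n * x + (r - 2) * (n * b)) + ((r - 1) * n + i) * Λ
      ≤ -(n * r) * (θ * (x / r + (r - 2) / r * b) - (r + 1 - i / n) / r * Λ) := by
  have : -(n * r) * (θ * (x / r + (r - 2) / r * b) - (r + 1 - i / n) / r * Λ)
      = -θ * (n * x + (r - 2) * (n * b)) + (n * (r + 1) - i) * Λ := by
    field_simp
    ring
  rw [this]
  nlinarith

section RoundRobin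

variable {Ω : Type*} [MeasurableSpace Ω] {μ : Measure Ω} {n k i : ℕ} {V : ℕ → ℕ → Ω → ℝ}

lemma measureReal_window_ge_le [IsFiniteMeasure μ] (hmeas : ∀ u r, Measurable (V u r))
    (hident : ∀ u ∈ Finset.Icc 1 n, ∀ r ∈ Finset.Icc 1 k, IdentDistrib (V u r) (V 1 1) μ μ)
    (hindep : iIndepFun
      (fun p : (Finset.Icc 1 n : Finset ℕ) × (Finset.Icc 1 k : Finset ℕ) => V p.1.1 p.2.1) μ)
    {θ : ℝ} (hθ : 0 ≤ θ) (hint : Integrable (fun ω => exp (θ * V 1 1 ω)) μ)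
    {s : ℕ} (hs : 1 ≤ s) (hk : 1 ≤ k) (hi : i ≤ n) (a : ℝ) :
    μ.real {ω | a ≤ ∑ r ∈ Finset.Ico s k, ∑ u ∈ Finset.Icc 1 n, V u r ω
        + ∑ u ∈ Finset.Icc 1 i, V u k ω}
      ≤ exp (-θ * a + ((k - s) * n + i : ℕ) * cgf (V 1 1) μ θ) := by
  have hcard := sum_preimage_windowPackets hs hk hi (fun _ _ => 1)
  simp only [Finset.sum_const, Nat.card_Ico, smul_eq_mul, mul_one, Nat.card_Icc,
    add_tsub_cancel_right] at hcard
  simp_rw [← sum_preimage_windowPackets hs hk hi (fun u r => V u r _), ← hcard]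
  exact measureReal_sum_ge_le_exp_card_mul_cgf (fun p => hmeas _ _) hindep
    (fun p _ => hident _ p.1.2 _ p.2.2) hθ hint a

lemma measure_window_le_exp_neg_mul_iSup [IsProbabilityMeasure μ]
    (hmeas : ∀ u r, Measurable (V u r)) (hpos : 0 ≤ᵐ[μ] V 1 1)
    (hident : ∀ u ∈ Finset.Icc 1 n, ∀ r ∈ Finset.Icc 1 k, IdentDistrib (V u r) (V 1 1) μ μ)
    (hindep : iIndepFun
      (fun p : (Finset.Icc 1 n : Finset ℕ) × (Finset.Icc 1 k : Finset ℕ) => V p.1.1 p.2.1) μ)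
    (hint : ∀ θ : ℝ, 0 ≤ θ → Integrable (fun ω => exp (θ * V 1 1 ω)) μ)
    (hi : i ∈ Finset.Icc 1 n) {s r : ℕ} (hs : 1 ≤ s) (hr : 1 ≤ r) (hsr : s + r = k + 1)
    (x b : ℝ) :
    μ {ω | (n : ℝ) * x ≤ ∑ q ∈ Finset.Ico s k, ∑ u ∈ Finset.Icc 1 n, V u q ω
        + ∑ u ∈ Finset.Icc 1 i, V u k ω - ((k : ℝ) - s - 1) * (n * b)}
      ≤ EReal.exp (((-((n : ℝ) * r) : ℝ) : EReal) * ⨆ θ : ℝ, ⨆ _ : 0 < θ,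
        ((θ * (x / r + (((r : ℝ) - 2) / r) * b)
          - (((r : ℝ) + 1 - (i : ℝ) / n) / r) * cgf (V 1 1) μ θ : ℝ) : EReal)) := by
  obtain ⟨hi1, hin⟩ := Finset.mem_Icc.mp hi
  have hn : (0 : ℝ) < n := by exact_mod_cast hi1.trans hin
  have hr₀ : (0 : ℝ) < r := by exact_mod_cast hr
  have hk : (k : ℝ) - s - 1 = r - 2 := by
    have : (s : ℝ) + r = k + 1 := by exact_mod_cast hsr
    linarith
  have hcount : (((k - s) * n + i : ℕ) : ℝ) = (r - 1) * n + i := by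
    push_cast [Nat.cast_sub (show s ≤ k by omega)]
    rw [show (k : ℝ) - s = r - 1 by linarith]
  rw [EReal.le_exp_neg_mul_iSup_iff (by positivity)]
  intro θ
  rw [EReal.le_exp_neg_mul_iSup_iff (by positivity)]
  intro hθ
  rw [← EReal.coe_mul, EReal.exp_coe,
    ENNReal.le_ofReal_iff_toReal_le (measure_ne_top _ _) (exp_nonneg _), ← measureReal_def]
  simp_rw [le_sub_iff_add_le]
  refine (measureReal_window_ge_le hmeas hident hindep hθ.le (hint θ hθ.le) hs (by omega) hin
    _).trans ?_
  rw [exp_le_exp, hk, hcount]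
  exact window_exponent_le hn hr₀ (by exact_mod_cast hin) (cgf_nonneg_of_nonneg hpos hθ.le)

end RoundRobin

theorem fcfs_outage_union_chernoff_bound_general {Ω : Type*} [MeasurableSpace Ω]
    (μ : Measure Ω) [IsProbabilityMeasure μ]
    (n k i : ℕ) (hk : 1 ≤ k) (hi : i ∈ Finset.Icc 1 n)
    (b x : ℝ)
    (V : ℕ → ℕ → Ω → ℝ)
    (hmeas : ∀ u r, Measurable (V u r))
    (hpos : ∀ u r ω, 0 ≤ V u r ω)
    (hident : ∀ u ∈ Finset.Icc 1 n, ∀ r ∈ Finset.Icc 1 k,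
      IdentDistrib (V u r) (V 1 1) μ μ)
    (hindep : iIndepFun
      (fun p : (Finset.Icc 1 n : Finset ℕ) × (Finset.Icc 1 k : Finset ℕ) =>
        V p.1.1 p.2.1) μ)
    (hint : ∀ θ : ℝ, 0 ≤ θ → Integrable (fun ω => exp (θ * V 1 1 ω)) μ)
    (A : Ω → ℝ)
    (hA : ∀ ω, A ω = (Finset.Icc 1 k).sup' (Finset.nonempty_Icc.mpr hk)
      (fun s => ∑ r ∈ Finset.Ico s k, ∑ u ∈ Finset.Icc 1 n, V u r ω
        + ∑ u ∈ Finset.Icc 1 i, V u k ω - ((k : ℝ) - s - 1) * (n * b)))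
    (J : ℕ → EReal)
    (hJ : ∀ r : ℕ, J r = ⨆ θ : ℝ, ⨆ _ : 0 < θ,
      ((θ * (x / r + (((r : ℝ) - 2) / r) * b)
        - (((r : ℝ) + 1 - (i : ℝ) / n) / r) * cgf (V 1 1) μ θ : ℝ) : EReal)) :
    μ {ω | (n : ℝ) * x ≤ A ω}
      ≤ ∑ r ∈ Finset.Icc 1 k, EReal.exp (((-((n : ℝ) * r) : ℝ) : EReal) * J r) := by
  obtain rfl : A = _ := funext hA
  rw [← Finset.sum_Icc_one_reflect]
  refine (measure_setOf_le_sup'_le_sum μ _ _ _).trans (Finset.sum_le_sum fun s hs => ?_)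
  obtain ⟨hs1, hsk⟩ := Finset.mem_Icc.mp hs
  rw [hJ]
  exact measure_window_le_exp_neg_mul_iSup hmeas (ae_of_all _ (hpos 1 1)) hident hindep hint hi
    hs1 (by omega) (by omega) x b

/-- Union-plus-Chernoff bound on the FCFS peak-age outage probability:
`P(A_i(k) ≥ n·x) ≤ Σ_{r=1}^{k} exp(−n·r·J(r))` where
`J r = sup_{θ>0} [θ·(x/r + ((r−2)/r)·b) − ((r+1−i/n)/r)·Λ(θ)]`. -/
theorem fcfs_outage_union_chernoff_bound {Ω : Type*} [MeasurableSpace Ω]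
    (μ : Measure Ω) [IsProbabilityMeasure μ]
    (n k i : ℕ) (hn : 1 ≤ n) (hk : 1 ≤ k) (hi : i ∈ Finset.Icc 1 n)
    (b x : ℝ) (hb : 0 < b) (hx : 0 < x)
    (V : ℕ → ℕ → Ω → ℝ)
    (hmeas : ∀ u r, Measurable (V u r))
    (hpos : ∀ u r ω, 0 ≤ V u r ω)
    (hident : ∀ u ∈ Finset.Icc 1 n, ∀ r ∈ Finset.Icc 1 k,
      IdentDistrib (V u r) (V 1 1) μ μ)
    (hindep : iIndepFun
      (fun p : (Finset.Icc 1 n : Finset ℕ) × (Finset.Icc 1 k : Finset ℕ) =>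
        V p.1.1 p.2.1) μ)
    (hint : ∀ θ : ℝ, 0 ≤ θ → Integrable (fun ω => exp (θ * V 1 1 ω)) μ)
    (A : Ω → ℝ)
    (hA : ∀ ω, A ω = (Finset.Icc 1 k).sup' (Finset.nonempty_Icc.mpr hk)
      (fun s => ∑ r ∈ Finset.Ico s k, ∑ u ∈ Finset.Icc 1 n, V u r ω
        + ∑ u ∈ Finset.Icc 1 i, V u k ω - ((k : ℝ) - s - 1) * (n * b)))
    (J : ℕ → EReal)
    (hJ : ∀ r : ℕ, J r = ⨆ θ : ℝ, ⨆ _ : 0 < θ,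
      ((θ * (x / r + (((r : ℝ) - 2) / r) * b)
        - (((r : ℝ) + 1 - (i : ℝ) / n) / r) * cgf (V 1 1) μ θ : ℝ) : EReal)) :
    μ {ω | (n : ℝ) * x ≤ A ω}
      ≤ ∑ r ∈ Finset.Icc 1 k, EReal.exp (((-((n : ℝ) * r) : ℝ) : EReal) * J r) :=
  fcfs_outage_union_chernoff_bound_general μ n k i hk hi b x V hmeas hpos hident hindep hint A hA J
    hJ
end

section
/- Fix an integer n ≥ 1, an index i ∈ {1,…,n}, reals b > 0, x > 0, and let Λ : [0,∞) → ℝ be the common log-moment generating function of i.i.d. nonnegative random variables, finite for all θ ≥ 0. Set α = i/n and, for each integer r ≥ 1, I_r(y) = sup over θ > 0 with Λ(θ) − θ·b < 0 of [ θ·y − ((r + 1 − α)/r)·Λ(θ) ]. Then for every θ > 0 with Λ(θ) − θ·b < 0 and every integer r ≥ 1: r·I_r( x/r + ((r−2)/r)·b ) ≥ r·(θ·b − Λ(θ)) + θ·(x − 2b) − (1 − α)·Λ(θ). In particular r·I_r(x/r + ((r−2)/r)·b) grows at least linearly in r. -/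
open MeasureTheory ProbabilityTheory Real

/-- Growth estimate for the FCFS rate function: with `α = i/n` and
`I r y = sup_{θ>0, Λ(θ)−θb<0} [θ·y − ((r+1−α)/r)·Λ(θ)]`, for every `θ > 0` with
`Λ(θ) − θ·b < 0` and every integer `r ≥ 1`,
`r·I_r(x/r + ((r−2)/r)·b) ≥ r·(θ·b − Λ(θ)) + θ·(x − 2b) − (1−α)·Λ(θ)`. -/
theorem fcfs_rate_function_linear_growth {Ω : Type*} [MeasurableSpace Ω]
    (μ : Measure Ω) [IsProbabilityMeasure μ]
    (n i : ℕ) (hn : 1 ≤ n) (hi : i ∈ Finset.Icc 1 n)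
    (b x : ℝ) (hb : 0 < b) (hx : 0 < x)
    (V : Ω → ℝ) (hmeas : Measurable V) (hpos : ∀ ω, 0 ≤ V ω)
    (hint : ∀ θ : ℝ, 0 ≤ θ → Integrable (fun ω => exp (θ * V ω)) μ)
    (α : ℝ) (hα : α = (i : ℝ) / n)
    (I : ℕ → ℝ → EReal)
    (hI : ∀ (r : ℕ) (y : ℝ), I r y = ⨆ θ : ℝ, ⨆ _ : 0 < θ ∧ cgf V μ θ - θ * b < 0,
      ((θ * y - (((r : ℝ) + 1 - α) / r) * cgf V μ θ : ℝ) : EReal)) :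
    ∀ θ : ℝ, 0 < θ → cgf V μ θ - θ * b < 0 → ∀ r : ℕ, 1 ≤ r →
      (((r : ℝ) * (θ * b - cgf V μ θ) + θ * (x - 2 * b)
          - (1 - α) * cgf V μ θ : ℝ) : EReal)
        ≤ (((r : ℝ)) : EReal) * I r (x / r + (((r : ℝ) - 2) / r) * b) := by
  intro θ hθ hΛ r hr
  set y : ℝ := x / r + (((r : ℝ) - 2) / r) * b with hy
  have hr0 : (0 : ℝ) < (r : ℝ) := by exact_mod_cast hr
  have hterm : ((θ * y - (((r : ℝ) + 1 - α) / r) * cgf V μ θ : ℝ) : EReal) ≤ I r y := by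
    rw [hI]
    exact le_iSup₂ (f := fun θ' (_ : 0 < θ' ∧ cgf V μ θ' - θ' * b < 0) =>
      ((θ' * y - (((r : ℝ) + 1 - α) / r) * cgf V μ θ' : ℝ) : EReal)) θ ⟨hθ, hΛ⟩
  have heq : (r : ℝ) * (θ * y - (((r : ℝ) + 1 - α) / r) * cgf V μ θ)
      = (r : ℝ) * (θ * b - cgf V μ θ) + θ * (x - 2 * b) - (1 - α) * cgf V μ θ := by
    rw [hy]; field_simp; ring
  calc (((r : ℝ) * (θ * b - cgf V μ θ) + θ * (x - 2 * b)
          - (1 - α) * cgf V μ θ : ℝ) : EReal)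
      = (((r : ℝ)) : EReal) * ((θ * y - (((r : ℝ) + 1 - α) / r) * cgf V μ θ : ℝ) : EReal) := by
        rw [← EReal.coe_mul, heq]
    _ ≤ (((r : ℝ)) : EReal) * I r y := by
        apply mul_le_mul_of_nonneg_left hterm
        exact_mod_cast hr0.le
end
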